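/- arXiv:2108.08172 — 3 statements merged into one kernel-verified Lean document; each statement's English description precedes it below -/
import Mathlib

section
/- Let Z be a p×q complex matrix with I_q - Z*Z positive definite, and set Y = [[0, Zᵗ],[Z, 0]] as a (p+q)×(p+q) block matrix. Then Y is symmetric (Y = Yᵗ) and I_{p+q} - Ȳ Y is positive definite; that is, the map Z ↦ Y sends the classical domain I_{p,q} into the Siegel domain III_{p+q}. -/
open Matrix ComplexOrder

private lemma EuclideanSpace.inner_piLp_equiv_symm {k : Type} [Fintype k] (x y : k → ℂ) :
    inner ℂ ((WithLp.equiv 2 (k → ℂ)).symm x) ((WithLp.equiv 2 (k → ℂ)).symm y) = star x ⬝ᵥ y := by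
  rw [dotProduct_comm]; rfl

private lemma dot_self_eq_norm_sq {k : Type} [Fintype k] (v : k → ℂ) :
    star v ⬝ᵥ v = ((‖(WithLp.equiv 2 (k → ℂ)).symm v‖ : ℝ) : ℂ) ^ 2 := by
  rw [← EuclideanSpace.inner_piLp_equiv_symm, inner_self_eq_norm_sq_to_K]
  norm_cast

private lemma dot_one_sub {a b : Type} [Fintype a] [Fintype b] [DecidableEq b]
    (M : Matrix a b ℂ) (w : b → ℂ) :
    star w ⬝ᵥ ((1 - Mᴴ * M) *ᵥ w) = star w ⬝ᵥ w - star (M *ᵥ w) ⬝ᵥ (M *ᵥ w) := by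
  rw [Matrix.sub_mulVec, Matrix.one_mulVec, dotProduct_sub, ← mulVec_mulVec, dotProduct_mulVec,
    star_mulVec]

private lemma fromBlocks_sub' {l m : Type} {α : Type} [Sub α]
    (A A' : Matrix l l α) (B B' : Matrix l m α) (C C' : Matrix m l α) (D D' : Matrix m m α) :
    Matrix.fromBlocks A B C D - Matrix.fromBlocks A' B' C' D' =
      Matrix.fromBlocks (A - A') (B - B') (C - C') (D - D') := by
  ext (i | i) (j | j) <;> rfl

private lemma aux_swap {m n : Type} [Fintype m] [Fintype n] [DecidableEq m] [DecidableEq n]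
    (A : Matrix m n ℂ) (h : (1 - Aᴴ * A).PosDef) : (1 - A * Aᴴ).PosDef := by
  refine Matrix.PosDef.of_dotProduct_mulVec_pos ((Matrix.isHermitian_one).sub (isHermitian_mul_conjTranspose_self A)) (fun x hx => ?_)
  set y := Aᴴ *ᵥ x with hy
  set X : EuclideanSpace ℂ m := (WithLp.equiv 2 (m → ℂ)).symm x with hX
  set Y : EuclideanSpace ℂ n := (WithLp.equiv 2 (n → ℂ)).symm y with hYdef
  set W : EuclideanSpace ℂ m := (WithLp.equiv 2 (m → ℂ)).symm (A *ᵥ y) with hW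
  have hsx : star x = star y ᵥ* Aᴴ ∨ True := Or.inr trivial
  have h1 : star y = star x ᵥ* A := by
    rw [hy, star_mulVec, conjTranspose_conjTranspose]
  -- main algebraic identity
  have e1 : star x ⬝ᵥ ((1 - A * Aᴴ) *ᵥ x) = star x ⬝ᵥ x - star y ⬝ᵥ y := by
    have := dot_one_sub Aᴴ x
    rwa [conjTranspose_conjTranspose, ← hy] at this
  -- norms
  have hax : (0 : ℝ) < ‖X‖ := by
    rw [norm_pos_iff]
    simpa [hX] using hx
  have hba : ‖Y‖ < ‖X‖ := by
    by_cases hy0 : y = 0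
    · have : ‖Y‖ = 0 := by simp [hYdef, hy0]
      rw [this]; exact hax
    · -- apply `h` at `y`
      have e2 : star y ⬝ᵥ ((1 - Aᴴ * A) *ᵥ y) = star y ⬝ᵥ y - star (A *ᵥ y) ⬝ᵥ (A *ᵥ y) :=
        dot_one_sub A y
      have h2 := h.dotProduct_mulVec_pos hy0
      rw [e2, dot_self_eq_norm_sq, dot_self_eq_norm_sq, ← hYdef, ← hW] at h2
      have hcb : ‖W‖ < ‖Y‖ := by
        have : (0 : ℂ) < (((‖Y‖ ^ 2 - ‖W‖ ^ 2 : ℝ)) : ℂ) := by push_cast; exact h2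
        have hr : (0 : ℝ) < ‖Y‖ ^ 2 - ‖W‖ ^ 2 := by exact_mod_cast this
        exact lt_of_pow_lt_pow_left₀ 2 (norm_nonneg _) (by linarith)
      -- Cauchy–Schwarz
      have hinner : (inner ℂ Y Y : ℂ) = inner ℂ X W := by
        rw [EuclideanSpace.inner_piLp_equiv_symm, EuclideanSpace.inner_piLp_equiv_symm, h1,
          ← dotProduct_mulVec]
      have hY2 : ‖Y‖ ^ 2 ≤ ‖X‖ * ‖W‖ := by
        calc ‖Y‖ ^ 2 = ‖(inner ℂ Y Y : ℂ)‖ := by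
              rw [inner_self_eq_norm_sq_to_K]
              simp [sq_abs]
          _ = ‖(inner ℂ X W : ℂ)‖ := by rw [hinner]
          _ ≤ ‖X‖ * ‖W‖ := norm_inner_le_norm X W
      have hb0 : (0 : ℝ) < ‖Y‖ := by
        rw [norm_pos_iff]
        simpa [hYdef] using hy0
      have : ‖Y‖ * ‖Y‖ < ‖X‖ * ‖Y‖ := by
        calc ‖Y‖ * ‖Y‖ = ‖Y‖ ^ 2 := (sq ‖Y‖).symm
          _ ≤ ‖X‖ * ‖W‖ := hY2
          _ < ‖X‖ * ‖Y‖ := by exact mul_lt_mul_of_pos_left hcb hax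
      exact lt_of_mul_lt_mul_right this hb0.le
  rw [e1, dot_self_eq_norm_sq x, dot_self_eq_norm_sq (Aᴴ *ᵥ x), ← hy, ← hX, ← hYdef]
  have hr : (0 : ℝ) < ‖X‖ ^ 2 - ‖Y‖ ^ 2 := by
    have := pow_lt_pow_left₀ hba (norm_nonneg Y) two_ne_zero
    linarith
  have : (0 : ℂ) < (((‖X‖ ^ 2 - ‖Y‖ ^ 2 : ℝ)) : ℂ) := by exact_mod_cast hr
  push_cast at this
  convert this using 1

private lemma posDef_fromBlocks {m n : Type} [Fintype m] [Fintype n] [DecidableEq m]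
    [DecidableEq n] {A : Matrix m m ℂ} {D : Matrix n n ℂ} (hA : A.PosDef) (hD : D.PosDef) :
    (Matrix.fromBlocks A 0 0 D).PosDef := by
  refine Matrix.PosDef.of_dotProduct_mulVec_pos ?_ ?_
  · simp [Matrix.IsHermitian, fromBlocks_conjTranspose, hA.1.eq, hD.1.eq]
  · intro x hx
    have hxe : x = Sum.elim (x ∘ Sum.inl) (x ∘ Sum.inr) := (Sum.elim_comp_inl_inr x).symm
    set u := x ∘ Sum.inl with hu
    set v := x ∘ Sum.inr with hv
    have hstar : star x = Sum.elim (star u) (star v) := by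
      funext i; cases i <;> rfl
    have hcalc : star x ⬝ᵥ ((Matrix.fromBlocks A 0 0 D) *ᵥ x) =
        star u ⬝ᵥ (A *ᵥ u) + star v ⬝ᵥ (D *ᵥ v) := by
      conv_lhs => rw [hstar, hxe, fromBlocks_mulVec]
      rw [sumElim_dotProduct_sumElim]
      simp
    rw [hcalc]
    have huv : u ≠ 0 ∨ v ≠ 0 := by
      by_contra hc
      push_neg at hc
      exact hx (by rw [hxe, hc.1, hc.2]; funext i; cases i <;> rfl)
    rcases huv with hu0 | hv0
    · exact add_pos_of_pos_of_nonneg (hA.dotProduct_mulVec_pos hu0) (hD.posSemidef.dotProduct_mulVec_nonneg v)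
    · exact add_pos_of_nonneg_of_pos (hA.posSemidef.dotProduct_mulVec_nonneg u) (hD.dotProduct_mulVec_pos hv0)

/-- The connecting embedding `ι_{p,q} : I_{p,q} → III_{p+q}`, `Z ↦ [[0, Zᵀ],[Z, 0]]`:
if `I_q - Z* Z` is positive definite then `Y = [[0, Zᵀ],[Z, 0]]` is symmetric and
`I_{p+q} - Ȳ Y` is positive definite. -/
theorem stmt_4 (p q : ℕ) (Z : Matrix (Fin p) (Fin q) ℂ) (h : (1 - Zᴴ * Z).PosDef)
    (Y : Matrix (Fin q ⊕ Fin p) (Fin q ⊕ Fin p) ℂ)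
    (hY : Y = Matrix.fromBlocks 0 Zᵀ Z 0) :
    Yᵀ = Y ∧ (1 - Y.map (starRingEnd ℂ) * Y).PosDef := by
  subst hY
  constructor
  · simp [fromBlocks_transpose]
  · have hmap : (Matrix.fromBlocks 0 Zᵀ Z 0).map (starRingEnd ℂ) =
        Matrix.fromBlocks 0 Zᴴ (Z.map star) 0 := by
      have hst : ⇑(starRingEnd ℂ) = (star : ℂ → ℂ) := rfl
      rw [fromBlocks_map, hst, Matrix.map_zero _ (star_zero ℂ), Matrix.map_zero _ (star_zero ℂ)]
      rfl
    have hblock : (1 : Matrix (Fin q ⊕ Fin p) (Fin q ⊕ Fin p) ℂ) -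
        (Matrix.fromBlocks 0 Zᵀ Z 0).map (starRingEnd ℂ) * Matrix.fromBlocks 0 Zᵀ Z 0 =
        Matrix.fromBlocks (1 - Zᴴ * Z) 0 0 ((1 - Z * Zᴴ)ᵀ) := by
      have h22 : (1 - Z * Zᴴ)ᵀ = 1 - Z.map star * Zᵀ := by
        ext i j
        simp [Matrix.transpose_apply, Matrix.sub_apply, Matrix.one_apply, Matrix.mul_apply,
          Matrix.map_apply, mul_comm, eq_comm]
      rw [hmap, fromBlocks_multiply, ← fromBlocks_one, fromBlocks_sub', h22]
      simp
    rw [hblock]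
    exact posDef_fromBlocks h ((aux_swap Z h).transpose)
end

section
/- Let Y = [[W₁, Zᵗ],[Z, W₂]] be a symmetric (p+q)×(p+q) complex matrix, where W₁ is p×p, W₂ is q×q and Z is q×p, such that I_{p+q} - Ȳ Y is positive definite. Then I_p - Z*Z is positive definite, i.e., the block extraction Y ↦ Z maps the Siegel domain III_{p+q} into the classical domain I_{q,p}. -/
open Matrix ComplexOrder

lemma star_dot_key {n m : Type*} [Fintype n] [Fintype m]
    (A : Matrix m n ℂ) (x : n → ℂ) :
    star x ⬝ᵥ ((Aᴴ * A) *ᵥ x) = star (A *ᵥ x) ⬝ᵥ (A *ᵥ x) := by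
  rw [← mulVec_mulVec, star_mulVec, dotProduct_mulVec]

/-- If `Y = [[W₁, Zᵀ],[Z, W₂]]` (with `W₁` of size `p × p`, `W₂` of size `q × q`, `Z` of size
`q × p`) is a symmetric `(p+q) × (p+q)` complex matrix with `I_{p+q} - Ȳ Y` positive definite,
then `I_p - Z* Z` is positive definite: the block extraction `Y ↦ Z` maps the Siegel domain
`III_{p+q}` into the classical domain `I_{q,p}`. -/
theorem stmt_5 (p q : ℕ)
    (W₁ : Matrix (Fin p) (Fin p) ℂ) (W₂ : Matrix (Fin q) (Fin q) ℂ)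
    (Z : Matrix (Fin q) (Fin p) ℂ)
    (Y : Matrix (Fin p ⊕ Fin q) (Fin p ⊕ Fin q) ℂ)
    (hY : Y = Matrix.fromBlocks W₁ Zᵀ Z W₂)
    (hsym : Yᵀ = Y)
    (hpos : (1 - Y.map (starRingEnd ℂ) * Y).PosDef) :
    (1 - Zᴴ * Z).PosDef := by
  have hmap : Y.map (starRingEnd ℂ) = Yᴴ := by
    rw [conjTranspose, hsym]; rfl
  rw [hmap] at hpos
  rw [posDef_iff_dotProduct_mulVec]
  constructor
  · have : (Zᴴ * Z).IsHermitian := isHermitian_conjTranspose_mul_self Z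
    exact (isHermitian_one).sub this
  · intro x hx
    set v : Fin p ⊕ Fin q → ℂ := Sum.elim x 0 with hv
    have hvne : v ≠ 0 := by
      intro h
      apply hx
      ext i
      have := congrFun h (Sum.inl i)
      simpa [hv] using this
    have hY2 := hpos.dotProduct_mulVec_pos hvne
    have hYv : Y *ᵥ v = Sum.elim (W₁ *ᵥ x) (Z *ᵥ x) := by
      rw [hY, hv, fromBlocks_mulVec]
      simp [Sum.elim_comp_inl, Sum.elim_comp_inr]
    rw [sub_mulVec, one_mulVec, dotProduct_sub, star_dot_key,
      hYv] at hY2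
    have hsv : star v = Sum.elim (star x) 0 := by
      ext i; cases i <;> simp [hv]
    rw [hsv, hv] at hY2
    have hstar : star (Sum.elim (W₁ *ᵥ x) (Z *ᵥ x))
        = Sum.elim (star (W₁ *ᵥ x)) (star (Z *ᵥ x)) := by
      ext i; cases i <;> rfl
    rw [hstar, sumElim_dotProduct_sumElim, sumElim_dotProduct_sumElim,
      dotProduct_zero, add_zero] at hY2
    have hkey : star x ⬝ᵥ ((1 - Zᴴ * Z) *ᵥ x)
        = star x ⬝ᵥ x - star (Z *ᵥ x) ⬝ᵥ (Z *ᵥ x) := by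
      rw [sub_mulVec, one_mulVec, dotProduct_sub, star_dot_key]
    rw [hkey]
    have hW : 0 ≤ star (W₁ *ᵥ x) ⬝ᵥ (W₁ *ᵥ x) := dotProduct_star_self_nonneg _
    calc (0 : ℂ) < star x ⬝ᵥ x - (star (W₁ *ᵥ x) ⬝ᵥ (W₁ *ᵥ x) + star (Z *ᵥ x) ⬝ᵥ (Z *ᵥ x)) := hY2
      _ ≤ star x ⬝ᵥ x - star (Z *ᵥ x) ⬝ᵥ (Z *ᵥ x) :=
        sub_le_sub_left (le_add_of_nonneg_left hW) _
end

section
/- Let Y be a symmetric n×n complex matrix with I_n - Ȳ Y positive definite, and let U be the top-left k×k principal submatrix of Y. Then U is symmetric and I_k - Ū U is positive definite. -/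
open Matrix ComplexOrder

lemma aux_sum_castLE {n k : ℕ} (hk : k ≤ n) (f : Fin n → ℂ)
    (hf : ∀ j : Fin n, ¬ (j : ℕ) < k → f j = 0) :
    ∑ j : Fin n, f j = ∑ i : Fin k, f (Fin.castLE hk i) := by
  have h := Finset.sum_map Finset.univ (Fin.castLEEmb hk) f
  simp only [Fin.coe_castLEEmb] at h
  rw [← h]
  refine (Finset.sum_subset (Finset.subset_univ _) ?_).symm
  intro j _ hj
  apply hf
  intro hlt
  exact hj (Finset.mem_map.mpr ⟨⟨j, hlt⟩, Finset.mem_univ _, rfl⟩)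

lemma aux_sum_le_castLE {n k : ℕ} (hk : k ≤ n) (f : Fin n → ℂ)
    (hf : ∀ j : Fin n, 0 ≤ f j) :
    ∑ i : Fin k, f (Fin.castLE hk i) ≤ ∑ j : Fin n, f j := by
  have h := Finset.sum_map Finset.univ (Fin.castLEEmb hk) f
  simp only [Fin.coe_castLEEmb] at h
  rw [← h]
  exact Finset.sum_le_sum_of_subset_of_nonneg (Finset.subset_univ _)
    (fun j _ _ => hf j)

/-- If `Y` is a symmetric `n × n` complex matrix with `I_n - Ȳ Y` positive definite and `U` is
the top-left `k × k` principal submatrix (`k ≤ n`), then `U` is symmetric and `I_k - Ū U`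
is positive definite. -/
theorem stmt_6 (n k : ℕ) (hk : k ≤ n)
    (Y : Matrix (Fin n) (Fin n) ℂ) (hsym : Yᵀ = Y)
    (hpos : (1 - Y.map (starRingEnd ℂ) * Y).PosDef)
    (U : Matrix (Fin k) (Fin k) ℂ)
    (hU : U = Y.submatrix (Fin.castLE hk) (Fin.castLE hk)) :
    Uᵀ = U ∧ (1 - U.map (starRingEnd ℂ) * U).PosDef := by
  have hUsym : Uᵀ = U := by
    rw [hU, Matrix.transpose_submatrix, hsym]
  have hYmap : Y.map (starRingEnd ℂ) = Yᴴ := by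
    ext i j
    simp only [Matrix.map_apply, Matrix.conjTranspose_apply, RCLike.star_def]
    conv_rhs => rw [← hsym]
    rfl
  have hUmap : U.map (starRingEnd ℂ) = Uᴴ := by
    ext i j
    simp only [Matrix.map_apply, Matrix.conjTranspose_apply, RCLike.star_def]
    conv_rhs => rw [← hUsym]
    rfl
  refine ⟨hUsym, Matrix.posDef_iff_dotProduct_mulVec.mpr ⟨?_, ?_⟩⟩
  · rw [hUmap]
    exact (Matrix.isHermitian_one).sub (Matrix.isHermitian_conjTranspose_mul_self U)
  · intro x hx
    set xt : Fin n → ℂ := fun j => if h : (j : ℕ) < k then x ⟨j, h⟩ else 0 with hxt_def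
    have hxt_cast : ∀ i : Fin k, xt (Fin.castLE hk i) = x i := by
      intro i
      simp [hxt_def]
    have hxt0 : ∀ j : Fin n, ¬ (j : ℕ) < k → xt j = 0 := by
      intro j hj
      simp [hxt_def, hj]
    have hxtne : xt ≠ 0 := by
      obtain ⟨i, hi⟩ := Function.ne_iff.mp hx
      intro h0
      apply hi
      have := congrFun h0 (Fin.castLE hk i)
      rwa [hxt_cast i] at this
    have hp := hpos.dotProduct_mulVec_pos hxtne
    -- rewrite both quadratic forms
    have key : ∀ (m : ℕ) (A : Matrix (Fin m) (Fin m) ℂ) (v : Fin m → ℂ),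
        star v ⬝ᵥ ((1 - Aᴴ * A) *ᵥ v)
          = star v ⬝ᵥ v - star (A *ᵥ v) ⬝ᵥ (A *ᵥ v) := by
      intro m A v
      rw [Matrix.sub_mulVec, Matrix.one_mulVec, dotProduct_sub,
        ← Matrix.mulVec_mulVec, Matrix.dotProduct_mulVec, ← Matrix.star_mulVec]
    rw [hUmap, key]
    rw [hYmap, key] at hp
    have heq1 : star x ⬝ᵥ x = star xt ⬝ᵥ xt := by
      show ∑ i : Fin k, star (x i) * x i = ∑ j : Fin n, star (xt j) * xt j
      rw [aux_sum_castLE hk (fun j => star (xt j) * xt j)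
        (fun j hj => by simp [hxt0 j hj])]
      exact Finset.sum_congr rfl fun i _ => by rw [hxt_cast i]
    have hUx : ∀ i : Fin k, (U *ᵥ x) i = (Y *ᵥ xt) (Fin.castLE hk i) := by
      intro i
      show ∑ j : Fin k, U i j * x j = ∑ j : Fin n, Y (Fin.castLE hk i) j * xt j
      rw [aux_sum_castLE hk (fun j => Y (Fin.castLE hk i) j * xt j)
        (fun j hj => by simp [hxt0 j hj])]
      refine Finset.sum_congr rfl fun j _ => ?_
      rw [hxt_cast j, hU]
      rfl
    have hle : star (U *ᵥ x) ⬝ᵥ (U *ᵥ x) ≤ star (Y *ᵥ xt) ⬝ᵥ (Y *ᵥ xt) := by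
      show ∑ i : Fin k, star ((U *ᵥ x) i) * (U *ᵥ x) i
          ≤ ∑ j : Fin n, star ((Y *ᵥ xt) j) * (Y *ᵥ xt) j
      have h1 : ∑ i : Fin k, star ((U *ᵥ x) i) * (U *ᵥ x) i
          = ∑ i : Fin k, star ((Y *ᵥ xt) (Fin.castLE hk i)) * (Y *ᵥ xt) (Fin.castLE hk i) :=
        Finset.sum_congr rfl fun i _ => by rw [hUx i]
      rw [h1]
      exact aux_sum_le_castLE hk (fun j => star ((Y *ᵥ xt) j) * (Y *ᵥ xt) j)
        (fun j => star_mul_self_nonneg _)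
    calc (0 : ℂ) < star xt ⬝ᵥ xt - star (Y *ᵥ xt) ⬝ᵥ (Y *ᵥ xt) := hp
      _ ≤ star x ⬝ᵥ x - star (U *ᵥ x) ⬝ᵥ (U *ᵥ x) := by
          rw [heq1]
          exact sub_le_sub_left hle _
end
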